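/- arXiv:1901.02421 — 6 statements merged into one kernel-verified Lean document; each statement's English description precedes it below -/
import Mathlib

section
/- Let c > 0, ε ∈ (0,c), and let (u_n) ⊂ L²(ℝ²) with ‖u_n‖_{L²}² = c for all n. Suppose that for every R > 0, liminf_n sup_{x∈ℝ²} ∫_{B(x,R)} u_n² ≤ c − ε. Then limsup_n V₁(u_n) = +∞, where V₁(u) = ∬ log(1+|x−y|) u(x)² u(y)² dx dy. -/
/-!
If every ball of radius `R` carries at most `c - d` of the total mass `c` of `ρ = u²`, then from
each point `x` at least `d` of the mass lies at distance `≥ R`, so `V₁(u) ≥ log (1 + R) · d · c`.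
The vanishing hypothesis gives this with `d = ε / 2` for infinitely many `n`, for every `R`, and
`log (1 + R) → ∞`.
-/

open MeasureTheory Filter ENNReal Metric

theorem ofReal_le_lintegral_compl_of_setIntegral_le {X : Type*} [MeasurableSpace X]
    {μ : Measure X} {ρ : X → ℝ} {s : Set X} {d : ℝ} (hs : MeasurableSet s) (hρ : Integrable ρ μ)
    (hρ0 : 0 ≤ ρ) (hle : ∫ x in s, ρ x ∂μ ≤ ∫ x, ρ x ∂μ - d) :
    ENNReal.ofReal d ≤ ∫⁻ x in sᶜ, ENNReal.ofReal (ρ x) ∂μ := by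
  rw [← ofReal_integral_eq_lintegral_ofReal hρ.integrableOn (ae_of_all _ fun x ↦ hρ0 x)]
  gcongr
  linarith [integral_add_compl hs hρ]

section

variable {X : Type*} [PseudoMetricSpace X] [SecondCountableTopology X] [MeasurableSpace X]
  [OpensMeasurableSpace X] {μ : Measure X} [SFinite μ] {ρ : X → ℝ} {R d : ℝ}

theorem ofReal_mul_le_lintegral_log_interaction (hρ : Integrable ρ μ) (hρ0 : 0 ≤ ρ) (hR : 0 ≤ R)
    (hball : ∀ x, ∫ y in ball x R, ρ y ∂μ ≤ ∫ y, ρ y ∂μ - d) :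
    ENNReal.ofReal (Real.log (1 + R) * d * ∫ x, ρ x ∂μ) ≤
      ∫⁻ q, ENNReal.ofReal (Real.log (1 + dist q.1 q.2) * ρ q.1 * ρ q.2) ∂μ.prod μ := by
  set g : X → ℝ≥0∞ := fun x ↦ ENNReal.ofReal (ρ x)
  set C := ENNReal.ofReal (Real.log (1 + R))
  have hlogR : 0 ≤ Real.log (1 + R) := Real.log_nonneg (by linarith)
  have hmass : ENNReal.ofReal (∫ x, ρ x ∂μ) = ∫⁻ x, g x ∂μ :=
    ofReal_integral_eq_lintegral_ofReal hρ (ae_of_all _ fun x ↦ hρ0 x)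
  have hkernel : ∀ x, ∀ y ∈ (ball x R)ᶜ,
      C * g x * g y ≤ ENNReal.ofReal (Real.log (1 + dist x y) * ρ x * ρ y) := by
    intro x y hy
    have hRy : R ≤ dist x y := by simpa [dist_comm] using hy
    have hlog : Real.log (1 + R) ≤ Real.log (1 + dist x y) :=
      Real.log_le_log (by linarith) (by linarith)
    rw [← ENNReal.ofReal_mul hlogR, ← ENNReal.ofReal_mul (mul_nonneg hlogR (hρ0 x))]
    exact ENNReal.ofReal_le_ofReal
      (mul_le_mul_of_nonneg_right (mul_le_mul_of_nonneg_right hlog (hρ0 x)) (hρ0 y))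
  calc ENNReal.ofReal (Real.log (1 + R) * d * ∫ x, ρ x ∂μ)
      = ∫⁻ x, C * g x * ENNReal.ofReal d ∂μ := by
        rw [ENNReal.ofReal_mul' (integral_nonneg hρ0), ENNReal.ofReal_mul hlogR, hmass,
          lintegral_mul_const' _ _ ofReal_ne_top, lintegral_const_mul' _ _ ofReal_ne_top]
        ring
    _ ≤ ∫⁻ x, C * g x * ∫⁻ y in (ball x R)ᶜ, g y ∂μ ∂μ := by
        gcongr with x
        exact ofReal_le_lintegral_compl_of_setIntegral_le measurableSet_ball hρ hρ0 (hball x)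
    _ = ∫⁻ x, ∫⁻ y in (ball x R)ᶜ, C * g x * g y ∂μ ∂μ := by
        refine lintegral_congr fun x ↦ ?_
        rw [lintegral_const_mul' _ _ (mul_ne_top ofReal_ne_top ofReal_ne_top)]
    _ ≤ ∫⁻ x, ∫⁻ y, ENNReal.ofReal (Real.log (1 + dist x y) * ρ x * ρ y) ∂μ ∂μ := by
        refine lintegral_mono fun x ↦ ?_
        exact (setLIntegral_mono' measurableSet_ball.compl (hkernel x)).trans
          (setLIntegral_le_lintegral _ _)
    _ = ∫⁻ q, ENNReal.ofReal (Real.log (1 + dist q.1 q.2) * ρ q.1 * ρ q.2) ∂μ.prod μ := by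
        have hρ_meas := hρ.aemeasurable
        rw [lintegral_prod _ (by fun_prop)]

end

theorem Real.exists_pos_le_log_one_add_mul (M : ℝ) {k : ℝ} (hk : 0 < k) :
    ∃ R > 0, M ≤ Real.log (1 + R) * k := by
  have hlog : Tendsto (fun R ↦ Real.log (1 + R) * k) atTop atTop :=
    (Real.tendsto_log_atTop.comp (tendsto_atTop_add_const_left _ 1 tendsto_id)).atTop_mul_const hk
  exact ((eventually_gt_atTop 0).and (hlog.eventually_ge_atTop M)).exists

theorem log_interaction_blowup_general
    (c ε : ℝ) (hε : ε ∈ Set.Ioo 0 c)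
    (u : ℕ → EuclideanSpace ℝ (Fin 2) → ℝ)
    (hmem : ∀ n, MemLp (u n) 2 volume)
    (hnorm : ∀ n, ∫ x : EuclideanSpace ℝ (Fin 2), (u n x) ^ 2 = c)
    (hvanish : ∀ R > (0 : ℝ),
      Filter.atTop.liminf (fun n =>
        ⨆ x : EuclideanSpace ℝ (Fin 2), ∫ y in Metric.ball x R, (u n y) ^ 2) ≤ c - ε) :
    Filter.atTop.limsup (fun n =>
      ∫⁻ q : EuclideanSpace ℝ (Fin 2) × EuclideanSpace ℝ (Fin 2),
        ENNReal.ofReal (Real.log (1 + dist q.1 q.2) * (u n q.1) ^ 2 * (u n q.2) ^ 2)) = ⊤ := by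
  obtain ⟨hε0, hεc⟩ := hε
  have hball_le : ∀ R n x, ∫ y in ball x R, u n y ^ 2 ≤ c := fun R n x ↦
    hnorm n ▸ setIntegral_le_integral (hmem n).integrable_sq (ae_of_all _ fun y ↦ sq_nonneg _)
  refine ENNReal.eq_top_of_forall_nnreal_le fun r ↦ ?_
  obtain ⟨R, hR, hr⟩ := Real.exists_pos_le_log_one_add_mul r (k := ε / 2 * c) (by nlinarith)
  have hfreq : ∃ᶠ n in atTop, ⨆ x, ∫ y in ball x R, u n y ^ 2 < c - ε / 2 :=
    frequently_lt_of_liminf_lt (isCoboundedUnder_ge_of_le atTop fun n ↦ ciSup_le (hball_le R n))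
      (by linarith [hvanish R hR])
  refine le_limsup_of_frequently_le' (hfreq.mono fun n hn ↦ ?_)
  have hball : ∀ x, ∫ y in ball x R, u n y ^ 2 ≤ (∫ y, u n y ^ 2) - ε / 2 := fun x ↦ by
    linarith [le_ciSup ⟨c, Set.forall_mem_range.2 (hball_le R n)⟩ x, hnorm n]
  calc (r : ℝ≥0∞) = ENNReal.ofReal r := (ofReal_coe_nnreal).symm
    _ ≤ ENNReal.ofReal (Real.log (1 + R) * (ε / 2) * ∫ y, u n y ^ 2) := by
        rw [hnorm n]; exact ENNReal.ofReal_le_ofReal (by linarith)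
    _ ≤ _ := ofReal_mul_le_lintegral_log_interaction (hmem n).integrable_sq
        (fun x ↦ sq_nonneg (u n x)) hR.le hball

/-- Vanishing of mass on all balls along a subsequence forces the logarithmic interaction
`V₁(u_n) = ∬ log(1+|x−y|) u_n(x)² u_n(y)²` to blow up: if `‖u_n‖₂² = c` and for every `R > 0`,
`liminf_n sup_x ∫_{B(x,R)} u_n² ≤ c − ε`, then `limsup_n V₁(u_n) = +∞`. -/
theorem log_interaction_blowup
    (c ε : ℝ) (hc : 0 < c) (hε : ε ∈ Set.Ioo 0 c)
    (u : ℕ → EuclideanSpace ℝ (Fin 2) → ℝ)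
    (hmem : ∀ n, MemLp (u n) 2 volume)
    (hnorm : ∀ n, ∫ x : EuclideanSpace ℝ (Fin 2), (u n x) ^ 2 = c)
    (hvanish : ∀ R > (0 : ℝ),
      Filter.atTop.liminf (fun n =>
        ⨆ x : EuclideanSpace ℝ (Fin 2), ∫ y in Metric.ball x R, (u n y) ^ 2) ≤ c - ε) :
    Filter.atTop.limsup (fun n =>
      ∫⁻ q : EuclideanSpace ℝ (Fin 2) × EuclideanSpace ℝ (Fin 2),
        ENNReal.ofReal (Real.log (1 + dist q.1 q.2) * (u n q.1) ^ 2 * (u n q.2) ^ 2)) = ⊤ :=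
  log_interaction_blowup_general c ε hε u hmem hnorm hvanish
end

section
/- Let γ > 0, a > 0, p > 4, and let u ∈ H¹(ℝ²) with ‖u‖₂² = c. Set Q(u) = A(u) − a(p−2)/p · C(u) − γc²/4 and k₀ = (p−2)γc²/(4(p−4)). If Q(u) ≤ 0 and A(u) = k₀, then c ≥ c₀ := 2[ p(p−4)^{(p−4)/2} / ((p−2)^{p/2} a γ^{(p−4)/2} K_GN) ]^{1/(p−3)}. In particular, if Q(u) ≤ 0 and c < c₀ then A(u) ≠ k₀. -/
open MeasureTheory

noncomputable section

/-- The kinetic energy `A(u) = ∫_{ℝ²} |∇u|²`. -/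
def gradNormSq (u : EuclideanSpace ℝ (Fin 2) → ℝ) : ℝ :=
  ∫ x : EuclideanSpace ℝ (Fin 2), ‖fderiv ℝ u x‖ ^ 2

/-- `C(u) = ∫_{ℝ²} |u|^p`. -/
def Cpow (p : ℝ) (u : EuclideanSpace ℝ (Fin 2) → ℝ) : ℝ :=
  ∫ x : EuclideanSpace ℝ (Fin 2), |u x| ^ p

open Real

/-!
At `A(u) = k₀` the inequality `Q(u) ≤ 0` leaves the excess `k₀ - γc²/4 = γc²/(2(p-4))`, which
must be paid for by the nonlinear term `a(p-2)/p · C(u)`. Bounding `C(u)` by Gagliardo–Nirenberg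
with `A(u) = k₀ ∝ c²` gives a quantity of order `c^(p-1)`, so `c^(p-3)` is bounded below by
`2^(p-3)` times the bracket in `c₀`; taking `(p-3)`-th roots gives `c ≥ c₀`.
-/

theorem mul_rpow_one_div_le_of_rpow_mul_le {b x c q : ℝ} (hb : 0 ≤ b) (hx : 0 ≤ x) (hc : 0 ≤ c)
    (hq : 0 < q) (h : b ^ q * x ≤ c ^ q) : b * x ^ (1 / q) ≤ c := by
  rw [one_div, ← rpow_rpow_inv hb hq.ne', ← mul_rpow (by positivity) hx]
  exact (rpow_inv_le_iff_of_pos (by positivity) hc hq).2 h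

theorem two_rpow_mul_le_rpow_of_excess_le {γ a p c K : ℝ} (hγ : 0 < γ) (ha : 0 < a) (hp : 4 < p)
    (hc : 0 < c) (hK : 0 < K)
    (h : γ * c ^ 2 / (2 * (p - 4)) ≤
      a * (p - 2) / p * (K * ((p - 2) * γ * c ^ 2 / (4 * (p - 4))) ^ (p / 2 - 1) * c)) :
    2 ^ (p - 3) * (p * (p - 4) ^ ((p - 4) / 2) / ((p - 2) ^ (p / 2) * a * γ ^ ((p - 4) / 2) * K))
      ≤ c ^ (p - 3) := by
  have hp2 : 0 < p - 2 := by linarith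
  have hp4 : 0 < p - 4 := by linarith
  -- All real powers are reduced to the atoms `x ^ r`, `x ^ (2 * r)` with `r = (p - 4) / 2`.
  set r := (p - 4) / 2
  have hk : ((p - 2) * γ * c ^ 2 / (4 * (p - 4))) ^ r
      = (p - 2) ^ r * γ ^ r * c ^ (2 * r) / (2 ^ (2 * r) * (p - 4) ^ r) := by
    rw [div_rpow (by positivity) (by positivity), mul_rpow (by positivity) (by positivity),
      mul_rpow (by positivity) (by positivity), mul_rpow (by positivity) (by positivity),
      show (4 : ℝ) = 2 ^ (2 : ℕ) by norm_num, ← rpow_natCast_mul (by positivity),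
      ← rpow_natCast_mul (by positivity)]
    push_cast
    rfl
  rw [show p / 2 - 1 = r + 1 by ring, rpow_add_one (by positivity), hk] at h
  rw [← mul_div_assoc, show p / 2 = r + (2 : ℕ) by push_cast; ring, rpow_add_natCast hp2.ne',
    show p - 3 = 2 * r + 1 by ring, rpow_add_one two_ne_zero, rpow_add_one hc.ne',
    div_le_iff₀ (by positivity)]
  field_simp at h ⊢
  linarith

theorem mass_lower_bound_of_Q_nonpos_general
    (γ a p c KGN : ℝ) (hγ : 0 < γ) (ha : 0 < a) (hp : 4 < p) (hc : 0 < c) (hKGN : 0 < KGN)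
    (u : EuclideanSpace ℝ (Fin 2) → ℝ)
    (hGN : Cpow p u ≤ KGN * (gradNormSq u) ^ (p / 2 - 1) * c)
    (hQ : gradNormSq u - a * (p - 2) / p * Cpow p u - γ * c ^ 2 / 4 ≤ 0)
    (hA : gradNormSq u = (p - 2) * γ * c ^ 2 / (4 * (p - 4))) :
    c ≥ 2 * ((p * (p - 4) ^ ((p - 4) / 2))
        / ((p - 2) ^ (p / 2) * a * γ ^ ((p - 4) / 2) * KGN)) ^ (1 / (p - 3)) := by
  have hp2 : 0 < p - 2 := by linarith
  have hp4 : 0 < p - 4 := by linarith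
  have hexcess : gradNormSq u - γ * c ^ 2 / 4 = γ * c ^ 2 / (2 * (p - 4)) := by
    rw [hA]
    field_simp
    ring
  have hpaid : γ * c ^ 2 / (2 * (p - 4))
      ≤ a * (p - 2) / p * (KGN * gradNormSq u ^ (p / 2 - 1) * c) := by
    linarith [mul_le_mul_of_nonneg_left hGN (by positivity : 0 ≤ a * (p - 2) / p)]
  rw [hA] at hpaid
  exact mul_rpow_one_div_le_of_rpow_mul_le zero_le_two (by positivity) hc.le (by linarith)
    (two_rpow_mul_le_rpow_of_excess_le hγ ha hp hc hKGN hpaid)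

/-- If `γ > 0`, `a > 0`, `p > 4`, `‖u‖₂² = c`, `Q(u) ≤ 0` and `A(u) = k₀`, then `c ≥ c₀`. -/
theorem mass_lower_bound_of_Q_nonpos
    (γ a p c KGN : ℝ) (hγ : 0 < γ) (ha : 0 < a) (hp : 4 < p) (hc : 0 < c) (hKGN : 0 < KGN)
    (u : EuclideanSpace ℝ (Fin 2) → ℝ)
    (hu : ∫ x : EuclideanSpace ℝ (Fin 2), (u x) ^ 2 = c)
    (hGN : Cpow p u ≤ KGN * (gradNormSq u) ^ (p / 2 - 1) * c)
    (hQ : gradNormSq u - a * (p - 2) / p * Cpow p u - γ * c ^ 2 / 4 ≤ 0)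
    (hA : gradNormSq u = (p - 2) * γ * c ^ 2 / (4 * (p - 4))) :
    c ≥ 2 * ((p * (p - 4) ^ ((p - 4) / 2))
        / ((p - 2) ^ (p / 2) * a * γ ^ ((p - 4) / 2) * KGN)) ^ (1 / (p - 3)) :=
  mass_lower_bound_of_Q_nonpos_general γ a p c KGN hγ ha hp hc hKGN u hGN hQ hA
end
end

section
/- Let γ > 0, a > 0, p > 4 and u ∈ X with ‖u‖₂² = c, Q(u) = A(u) − a(p−2)/p C(u) − γc²/4 = 0. Then F(u) ≥ [(p−4)/(2(p−2))] A(u) − (γ c^{3/2}/4) A(u)^{1/2}. Consequently F restricted to Λ(c)={u∈S(c): Q(u)=0} is coercive in A(u) and bounded from below. -/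
open MeasureTheory

noncomputable section

/-- `V₁(u) = ∬ log(1+|x−y|) u(x)² u(y)²`. -/
def V1 (u : EuclideanSpace ℝ (Fin 2) → ℝ) : ℝ :=
  ∫ q : EuclideanSpace ℝ (Fin 2) × EuclideanSpace ℝ (Fin 2),
    Real.log (1 + dist q.1 q.2) * (u q.1) ^ 2 * (u q.2) ^ 2

/-- `V₂(u) = ∬ log(1+1/|x−y|) u(x)² u(y)²`. -/
def V2 (u : EuclideanSpace ℝ (Fin 2) → ℝ) : ℝ :=
  ∫ q : EuclideanSpace ℝ (Fin 2) × EuclideanSpace ℝ (Fin 2),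
    Real.log (1 + 1 / dist q.1 q.2) * (u q.1) ^ 2 * (u q.2) ^ 2

/-- Coercivity of `F` on `Λ(c)` for `γ > 0`, `a > 0`, `p > 4`: if `Q(u) = 0` then
`F(u) ≥ (p−4)/(2(p−2)) A(u) − (γ c^{3/2}/4) √(A(u))`. -/
theorem F_coercive_on_Lambda
    (γ a p c : ℝ) (hγ : 0 < γ) (ha : 0 < a) (hp : 4 < p) (hc : 0 < c)
    (u : EuclideanSpace ℝ (Fin 2) → ℝ)
    (hu : ∫ x : EuclideanSpace ℝ (Fin 2), (u x) ^ 2 = c)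
    (hQ : gradNormSq u - a * (p - 2) / p * Cpow p u - γ * c ^ 2 / 4 = 0)
    (hV2 : (γ / 4) * V2 u ≤ (γ * c ^ ((3 : ℝ) / 2) / 4) * Real.sqrt (gradNormSq u)) :
    (1 / 2) * gradNormSq u + (γ / 4) * (V1 u - V2 u) - (a / p) * Cpow p u
      ≥ ((p - 4) / (2 * (p - 2))) * gradNormSq u
        - (γ * c ^ ((3 : ℝ) / 2) / 4) * Real.sqrt (gradNormSq u) := by
  have hV1 : 0 ≤ V1 u := by
    apply integral_nonneg
    intro q
    have hlog : 0 ≤ Real.log (1 + dist q.1 q.2) :=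
      Real.log_nonneg (by linarith [dist_nonneg (x := q.1) (y := q.2)])
    positivity
  have hp2 : (0:ℝ) < p - 2 := by linarith
  have hppos : (0:ℝ) < p := by linarith
  have hC : (a / p) * Cpow p u = (gradNormSq u - γ * c ^ 2 / 4) / (p - 2) := by
    field_simp at hQ ⊢
    nlinarith [hQ]
  have hpos : 0 ≤ γ * c ^ 2 / 4 / (p - 2) := by positivity
  have hγ4 : (γ / 4) * (V1 u - V2 u) ≥ - ((γ * c ^ ((3 : ℝ) / 2) / 4) * Real.sqrt (gradNormSq u)) := by
    have : (γ / 4) * V1 u ≥ 0 := by positivity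
    nlinarith [hV2]
  have key : (1 / 2) * gradNormSq u - (a / p) * Cpow p u
      ≥ ((p - 4) / (2 * (p - 2))) * gradNormSq u := by
    rw [hC]
    have h1 : (gradNormSq u - γ * c ^ 2 / 4) / (p - 2) * (p - 2)
        = gradNormSq u - γ * c ^ 2 / 4 := div_mul_cancel₀ _ (ne_of_gt hp2)
    rw [ge_iff_le, div_mul_eq_mul_div,
      div_le_iff₀ (by positivity : (0:ℝ) < 2 * (p - 2))]
    nlinarith [h1, sq_nonneg c, hγ.le, hc.le]
  linarith
end
end

section
/- Assume γ < 0 (write the functional with −γ, γ > 0), a > 0 and 2 < p < 4. If a < K₁ γ^{(4−p)/2} c^{3−p} with K₁ = (1/2^{(4−p)/2})·(1/K_GN)·p/(2^{3−p}(p−2)^{p/2}(4−p)^{(4−p)/2}), then for every u ∈ H¹(ℝ²) with ‖u‖₂² = c one has Q(u) = A(u) + γc²/4 − a(p−2)/p·C(u) > 0. In particular Λ(c) = {u ∈ S(c) : Q(u)=0} is empty. -/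
open MeasureTheory

noncomputable section

/-!
By Gagliardo–Nirenberg, `Q(u) ≥ A + γc²/4 − b A^s` with `A = A(u)`, `s = (p − 2)/2` and
`b = a(p − 2) K_GN c / p`. Weighted AM–GM with weights `s` and `t = (4 − p)/2 = 1 − s` gives
`b A^s ≤ A + t (b s^s)^{1/t}`, and the choice of `K₁` makes `a < K₁ γ^t c^{3−p}` equivalent to
`b s^s < (γc²/(4(4 − p)))^t`; then `t (b s^s)^{1/t} < γc²/8`.
-/

theorem mul_rpow_le_add_of_add_eq_one {b s t A : ℝ} (hb : 0 ≤ b) (hs : 0 < s) (ht : 0 < t)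
    (hst : s + t = 1) (hA : 0 ≤ A) : b * A ^ s ≤ A + t * (b * s ^ s) ^ t⁻¹ := by
  have hY : ((b * s ^ s) ^ t⁻¹) ^ t = b * s ^ s := by
    rw [← Real.rpow_mul (by positivity), inv_mul_cancel₀ ht.ne', Real.rpow_one]
  calc b * A ^ s = (A / s) ^ s * ((b * s ^ s) ^ t⁻¹) ^ t := by
        rw [hY, Real.div_rpow hA hs.le]
        field_simp
    _ ≤ s * (A / s) + t * (b * s ^ s) ^ t⁻¹ :=
        Real.geom_mean_le_arith_mean2_weighted hs.le ht.le (by positivity) (by positivity) hst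
    _ = A + t * (b * s ^ s) ^ t⁻¹ := by field_simp

def K₁ (p KGN : ℝ) : ℝ :=
  (1 / 2 ^ ((4 - p) / 2)) * (1 / KGN)
    * (p / (2 ^ (3 - p) * (p - 2) ^ (p / 2) * (4 - p) ^ ((4 - p) / 2)))

theorem K₁_mul_eq {γ p c KGN : ℝ} (hγ : 0 < γ) (hp : 2 < p) (hp4 : p < 4) (hc : 0 < c)
    (hKGN : 0 < KGN) :
    K₁ p KGN * γ ^ ((4 - p) / 2) * c ^ (3 - p)
        * ((p - 2) * KGN * c / p * ((p - 2) / 2) ^ ((p - 2) / 2))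
      = (γ * c ^ 2 / (4 * (4 - p))) ^ ((4 - p) / 2) := by
  have hp2 : 0 < p - 2 := by linarith
  have h4p : 0 < 4 - p := by linarith
  have hp0 : 0 < p := by linarith
  unfold K₁
  apply Real.log_injOn_pos (Set.mem_Ioi.2 (by positivity)) (Set.mem_Ioi.2 (by positivity))
  have h4 : Real.log 4 = 2 * Real.log 2 := by
    rw [show (4 : ℝ) = 2 ^ 2 by norm_num, Real.log_pow]; norm_num
  simp (disch := positivity) only [Real.log_mul, Real.log_div, Real.log_rpow, Real.log_pow,
    Real.log_one, h4]
  push_cast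
  ring

/-- Negative-`γ` case (written with `−γ`, `γ > 0`), `a > 0`, `2 < p < 4`: if
`a < K₁ γ^{(4−p)/2} c^{3−p}` then `Q(u) = A(u) + γc²/4 − a(p−2)/p C(u) > 0` for every
`u ∈ S(c)` (so that `Λ(c)` is empty). -/
theorem Q_pos_of_a_small
    (γ a p c KGN : ℝ) (hγ : 0 < γ) (ha : 0 < a) (hp : 2 < p) (hp4 : p < 4)
    (hc : 0 < c) (hKGN : 0 < KGN)
    (hsmall : a < ((1 / 2 ^ ((4 - p) / 2)) * (1 / KGN)
        * (p / (2 ^ (3 - p) * (p - 2) ^ (p / 2) * (4 - p) ^ ((4 - p) / 2))))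
      * γ ^ ((4 - p) / 2) * c ^ (3 - p)) :
    ∀ u : EuclideanSpace ℝ (Fin 2) → ℝ,
      (∫ x : EuclideanSpace ℝ (Fin 2), (u x) ^ 2) = c →
      Cpow p u ≤ KGN * (gradNormSq u) ^ ((p - 2) / 2) * c →
      0 < gradNormSq u + γ * c ^ 2 / 4 - a * (p - 2) / p * Cpow p u := by
  intro u _ hGN
  have hA : 0 ≤ gradNormSq u := integral_nonneg fun _ => by positivity
  set b := a * (p - 2) * KGN * c / p
  have hCb : a * (p - 2) / p * Cpow p u ≤ b * gradNormSq u ^ ((p - 2) / 2) :=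
    calc a * (p - 2) / p * Cpow p u
        ≤ a * (p - 2) / p * (KGN * gradNormSq u ^ ((p - 2) / 2) * c) := by gcongr
      _ = b * gradNormSq u ^ ((p - 2) / 2) := by ring
  have hYoung := mul_rpow_le_add_of_add_eq_one (b := b) (by positivity)
    (by linarith : 0 < (p - 2) / 2) (by linarith : 0 < (4 - p) / 2) (by ring) hA
  have hbB : (b * ((p - 2) / 2) ^ ((p - 2) / 2)) ^ ((4 - p) / 2)⁻¹
      < γ * c ^ 2 / (4 * (4 - p)) := by
    rw [Real.rpow_inv_lt_iff_of_pos (by positivity) (by positivity) (by linarith),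
      ← K₁_mul_eq hγ hp hp4 hc hKGN]
    calc b * ((p - 2) / 2) ^ ((p - 2) / 2)
        = a * ((p - 2) * KGN * c / p * ((p - 2) / 2) ^ ((p - 2) / 2)) := by ring
      _ < K₁ p KGN * γ ^ ((4 - p) / 2) * c ^ (3 - p)
          * ((p - 2) * KGN * c / p * ((p - 2) / 2) ^ ((p - 2) / 2)) := by
          gcongr; exact hsmall
  have hRemainder : (4 - p) / 2 * (b * ((p - 2) / 2) ^ ((p - 2) / 2)) ^ ((4 - p) / 2)⁻¹
      < γ * c ^ 2 / 8 :=
    calc _ < (4 - p) / 2 * (γ * c ^ 2 / (4 * (4 - p))) := by gcongr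
      _ = γ * c ^ 2 / 8 := by field_simp [show 4 - p ≠ 0 by linarith]; ring
  linarith [show 0 < γ * c ^ 2 by positivity]
end
end

section
/- Assume a > 0, 2 < p < 4, γ > 0, c > 0 (negative-γ case rewritten). Let u ∈ H¹(ℝ²), ‖u‖₂² = c, Q(u) = A(u) + γc²/4 − a(p−2)/p·C(u) ≤ 0, and A(u) = k₀ = (p−2)γc²/(4(4−p)). Then a ≥ K₂ γ^{(4−p)/2} c^{3−p}, where K₂ = (1/K_GN)·p/(2^{3−p}(p−2)^{p/2}(4−p)^{(4−p)/2}); with strict inequality if Q(u) < 0. -/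
/-!
By `Q(u) ≤ 0` and Gagliardo–Nirenberg,
`p (A + γ c² / 4) ≤ a (p - 2) C ≤ a (p - 2) K_GN A^{(p-2)/2} c`.
At `A = k₀` the left-hand side is `p γ c² / (2 (4 - p))`, so `a` is at least
`p γ c² / (2 (4 - p) (p - 2) K_GN k₀^{(p-2)/2} c)`, which is `K₂ γ^{(4-p)/2} c^{3-p}`
once the real power of `k₀` is expanded.
-/

open MeasureTheory

noncomputable section

open Real

section LowerBoundConstant

variable {p γ c K : ℝ}

lemma rpow_kinetic_level_eq (hγ : 0 < γ) (hc : 0 < c) (hp : 2 < p) (hp4 : p < 4) :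
    ((p - 2) * γ * c ^ 2 / (4 * (4 - p))) ^ ((p - 2) / 2) =
      (p - 2) ^ ((p - 2) / 2) * γ ^ ((p - 2) / 2) * c ^ (p - 2) /
        (2 ^ (p - 2) * (4 - p) ^ ((p - 2) / 2)) := by
  have hp2 : 0 < p - 2 := by linarith
  have hp4' : 0 < 4 - p := by linarith
  have hc2 : (c ^ 2) ^ ((p - 2) / 2) = c ^ (p - 2) := by
    rw [← rpow_natCast, ← rpow_mul hc.le]; push_cast; ring_nf
  have h4 : (4 : ℝ) ^ ((p - 2) / 2) = 2 ^ (p - 2) := by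
    rw [show (4 : ℝ) = 2 ^ (2 : ℝ) by norm_num, ← rpow_mul zero_le_two]; ring_nf
  rw [div_rpow (by positivity) (by positivity), mul_rpow (by positivity) (by positivity),
    mul_rpow hp2.le hγ.le, mul_rpow zero_le_four hp4'.le, hc2, h4]

lemma lower_bound_constant_eq (hγ : 0 < γ) (hc : 0 < c) (hK : 0 < K) (hp : 2 < p)
    (hp4 : p < 4) :
    1 / K * (p / (2 ^ (3 - p) * (p - 2) ^ (p / 2) * (4 - p) ^ ((4 - p) / 2)))
        * γ ^ ((4 - p) / 2) * c ^ (3 - p) =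
      γ * c ^ 2 / (2 * (4 - p)) * p /
        ((p - 2) * K * ((p - 2) * γ * c ^ 2 / (4 * (4 - p))) ^ ((p - 2) / 2) * c) := by
  have hp2 : 0 < p - 2 := by linarith
  have hp4' : 0 < 4 - p := by linarith
  rw [rpow_kinetic_level_eq hγ hc hp hp4, show (4 - p) / 2 = 1 - (p - 2) / 2 by ring,
    rpow_sub hγ, rpow_sub hp4',
    show 3 - p = 1 - (p - 2) by ring, rpow_sub hc, rpow_sub two_pos,
    show p / 2 = 1 + (p - 2) / 2 by ring, rpow_add hp2]
  simp only [rpow_one]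
  field_simp

end LowerBoundConstant

theorem a_lower_bound_of_Q_nonpos_general
    (γ a p c KGN : ℝ) (hγ : 0 < γ) (ha : 0 < a) (hp : 2 < p) (hp4 : p < 4)
    (hc : 0 < c) (hKGN : 0 < KGN)
    (u : EuclideanSpace ℝ (Fin 2) → ℝ)
    (hGN : Cpow p u ≤ KGN * (gradNormSq u) ^ ((p - 2) / 2) * c)
    (hQ : gradNormSq u + γ * c ^ 2 / 4 - a * (p - 2) / p * Cpow p u ≤ 0)
    (hA : gradNormSq u = (p - 2) * γ * c ^ 2 / (4 * (4 - p))) :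
    ((1 / KGN) * (p / (2 ^ (3 - p) * (p - 2) ^ (p / 2) * (4 - p) ^ ((4 - p) / 2))))
        * γ ^ ((4 - p) / 2) * c ^ (3 - p) ≤ a ∧
    (gradNormSq u + γ * c ^ 2 / 4 - a * (p - 2) / p * Cpow p u < 0 →
      ((1 / KGN) * (p / (2 ^ (3 - p) * (p - 2) ^ (p / 2) * (4 - p) ^ ((4 - p) / 2))))
        * γ ^ ((4 - p) / 2) * c ^ (3 - p) < a) := by
  have hp2 : 0 < p - 2 := by linarith
  have hp4' : 0 < 4 - p := by linarith
  have hA_add : gradNormSq u + γ * c ^ 2 / 4 = γ * c ^ 2 / (2 * (4 - p)) := by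
    rw [hA]; field_simp; ring
  have hpQ : p * (gradNormSq u + γ * c ^ 2 / 4 - a * (p - 2) / p * Cpow p u) =
      γ * c ^ 2 / (2 * (4 - p)) * p - a * (p - 2) * Cpow p u := by
    rw [← hA_add]; field_simp
  have hbound := lower_bound_constant_eq hγ hc hKGN hp hp4
  rw [← hA] at hbound
  generalize hG : KGN * gradNormSq u ^ ((p - 2) / 2) * c = G at hGN
  have hG_pos : 0 < G := by rw [← hG, hA]; positivity
  have haC : a * (p - 2) * Cpow p u ≤ a * ((p - 2) * G) := by
    rw [mul_assoc]; gcongr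
  rw [hbound,
    show (p - 2) * KGN * gradNormSq u ^ ((p - 2) / 2) * c = (p - 2) * G by rw [← hG]; ring,
    div_le_iff₀ (by positivity), div_lt_iff₀ (by positivity)]
  exact ⟨by nlinarith, fun hQ' => by nlinarith⟩

/-- Negative-`γ` case, `a > 0`, `2 < p < 4`: if `Q(u) ≤ 0` and `A(u) = k₀` then
`a ≥ K₂ γ^{(4−p)/2} c^{3−p}`, with strict inequality when `Q(u) < 0`. -/
theorem a_lower_bound_of_Q_nonpos
    (γ a p c KGN : ℝ) (hγ : 0 < γ) (ha : 0 < a) (hp : 2 < p) (hp4 : p < 4)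
    (hc : 0 < c) (hKGN : 0 < KGN)
    (u : EuclideanSpace ℝ (Fin 2) → ℝ)
    (hu : ∫ x : EuclideanSpace ℝ (Fin 2), (u x) ^ 2 = c)
    (hGN : Cpow p u ≤ KGN * (gradNormSq u) ^ ((p - 2) / 2) * c)
    (hQ : gradNormSq u + γ * c ^ 2 / 4 - a * (p - 2) / p * Cpow p u ≤ 0)
    (hA : gradNormSq u = (p - 2) * γ * c ^ 2 / (4 * (4 - p))) :
    ((1 / KGN) * (p / (2 ^ (3 - p) * (p - 2) ^ (p / 2) * (4 - p) ^ ((4 - p) / 2))))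
        * γ ^ ((4 - p) / 2) * c ^ (3 - p) ≤ a ∧
    (gradNormSq u + γ * c ^ 2 / 4 - a * (p - 2) / p * Cpow p u < 0 →
      ((1 / KGN) * (p / (2 ^ (3 - p) * (p - 2) ^ (p / 2) * (4 - p) ^ ((4 - p) / 2))))
        * γ ^ ((4 - p) / 2) * c ^ (3 - p) < a) :=
  a_lower_bound_of_Q_nonpos_general γ a p c KGN hγ ha hp hp4 hc hKGN u hGN hQ hA
end
end

section
/- In the negative-γ case with a > 0, 2 < p < 4, for u ∈ S(c) set t_u* = [a(p−2)²C(u)/(2pA(u))]^{1/(4−p)}. Then u belongs to V = {u ∈ S(c) : (t_u*)² A(u) > k₀} (with k₀ = (p−2)γc²/(4(4−p))) if and only if inf_{t>0} Q(uᵗ) = Q(u^{t_u*}) < 0, where Q(uᵗ) = t²A(u) + γc²/4 − a(p−2)/p·t^{p−2}C(u). -/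
/-!
Write `q = p − 2 ∈ (0, 2)` and `D = a(p−2)C/p`, so that `Q(uᵗ) = t²A + γc²/4 − D t^q`.
The point `t*` is the critical point of `t ↦ t²A − D t^q`, i.e. `q D t*^q = 2A t*²`.
Substituting `t = t* s`, minimality becomes Bernoulli's inequality
`(s²)^(q/2) ≤ 1 + (q/2)(s² − 1)`. At `t*` the critical identity gives
`q Q(u^{t*}) = q γc²/4 − (2 − q)(t*)²A`, whose sign is that of `k₀ − (t*)²A`.
-/

open Set

theorem rpow_le_one_add_half_mul_sq_sub_one {s q : ℝ} (hs : 0 ≤ s) (hq0 : 0 ≤ q) (hq2 : q ≤ 2) :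
    s ^ q ≤ 1 + q / 2 * (s ^ 2 - 1) := by
  have hsq : s ^ q = (1 + (s ^ 2 - 1)) ^ (q / 2) := by
    rw [add_sub_cancel, ← Real.rpow_natCast, ← Real.rpow_mul hs, Nat.cast_ofNat,
      mul_div_cancel₀ q two_ne_zero]
  rw [hsq]
  exact rpow_one_add_le_one_add_mul_self (by nlinarith) (by linarith) (by linarith)

theorem critical_of_rpow_sub_eq {A D q T : ℝ} (hA : A ≠ 0) (hT : 0 < T)
    (hT_eq : T ^ (2 - q) = q * D / (2 * A)) :
    q * (D * T ^ q) = 2 * (T ^ 2 * A) := by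
  have hsplit : T ^ (2 : ℝ) = T ^ q * T ^ (2 - q) := by
    rw [← Real.rpow_add hT, add_sub_cancel]
  rw [← Real.rpow_natCast, Nat.cast_ofNat, hsplit, hT_eq]
  field_simp

theorem sq_mul_sub_mul_rpow_le_of_critical {A D q T t : ℝ} (hT : 0 < T) (ht : 0 ≤ t)
    (hD : 0 ≤ D) (hq0 : 0 ≤ q) (hq2 : q ≤ 2) (hcrit : q * (D * T ^ q) = 2 * (T ^ 2 * A)) :
    T ^ 2 * A - D * T ^ q ≤ t ^ 2 * A - D * t ^ q := by
  have hbern := rpow_le_one_add_half_mul_sq_sub_one (div_nonneg ht hT.le) hq0 hq2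
  have hDT : 0 ≤ D * T ^ q := by positivity
  have : D * t ^ q ≤ D * T ^ q + t ^ 2 * A - T ^ 2 * A :=
    calc D * t ^ q = D * T ^ q * (t / T) ^ q := by
          rw [Real.div_rpow ht hT.le]
          field_simp
      _ ≤ D * T ^ q * (1 + q / 2 * ((t / T) ^ 2 - 1)) := mul_le_mul_of_nonneg_left hbern hDT
      _ = D * T ^ q + t ^ 2 * A - T ^ 2 * A := by
          rw [div_pow]
          field_simp
          linear_combination (t ^ 2 - T ^ 2) * hcrit
  linarith

theorem critical_value_neg_iff {A B D q T : ℝ} (hq : 0 < q) (hq2 : q < 2)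
    (hcrit : q * (D * T ^ q) = 2 * (T ^ 2 * A)) :
    T ^ 2 * A > q * B / (2 - q) ↔ T ^ 2 * A + B - D * T ^ q < 0 := by
  have hscaled : q * (T ^ 2 * A + B - D * T ^ q) = q * B - T ^ 2 * A * (2 - q) := by
    linear_combination -hcrit
  rw [gt_iff_lt, div_lt_iff₀ (by linarith), ← sub_neg, ← hscaled]
  exact ⟨fun h => (pos_iff_neg_of_mul_neg h).mp hq, mul_neg_of_pos_of_neg hq⟩

theorem mem_V_iff_min_Q_neg_general
    (γ a p c A C : ℝ) (ha : 0 < a) (hp : 2 < p) (hp4 : p < 4)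
    (hA : 0 < A) (hC : 0 < C) :
    (∀ t ∈ Ioi (0 : ℝ),
        ((a * (p - 2) ^ 2 * C / (2 * p * A)) ^ (1 / (4 - p))) ^ 2 * A + γ * c ^ 2 / 4
          - a * (p - 2) / p
            * ((a * (p - 2) ^ 2 * C / (2 * p * A)) ^ (1 / (4 - p))) ^ (p - 2) * C
        ≤ t ^ 2 * A + γ * c ^ 2 / 4 - a * (p - 2) / p * t ^ (p - 2) * C) ∧
    (((a * (p - 2) ^ 2 * C / (2 * p * A)) ^ (1 / (4 - p))) ^ 2 * A
        > (p - 2) * γ * c ^ 2 / (4 * (4 - p)) ↔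
      ((a * (p - 2) ^ 2 * C / (2 * p * A)) ^ (1 / (4 - p))) ^ 2 * A + γ * c ^ 2 / 4
          - a * (p - 2) / p
            * ((a * (p - 2) ^ 2 * C / (2 * p * A)) ^ (1 / (4 - p))) ^ (p - 2) * C < 0) := by
  set T := (a * (p - 2) ^ 2 * C / (2 * p * A)) ^ (1 / (4 - p)) with hT_def
  have hT : 0 < T := by positivity
  have hq : 0 < p - 2 := by linarith
  have hD : 0 ≤ a * (p - 2) / p * C := by positivity
  have hcrit : (p - 2) * (a * (p - 2) / p * C * T ^ (p - 2)) = 2 * (T ^ 2 * A) := by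
    refine critical_of_rpow_sub_eq hA.ne' hT ?_
    rw [show 2 - (p - 2) = 4 - p by ring, hT_def, one_div,
      Real.rpow_inv_rpow (by positivity) (by linarith)]
    field_simp
  have hQ : ∀ t : ℝ, t ^ 2 * A + γ * c ^ 2 / 4 - a * (p - 2) / p * t ^ (p - 2) * C
      = t ^ 2 * A + γ * c ^ 2 / 4 - a * (p - 2) / p * C * t ^ (p - 2) := fun t => by ring
  have hk₀ : (p - 2) * γ * c ^ 2 / (4 * (4 - p)) = (p - 2) * (γ * c ^ 2 / 4) / (2 - (p - 2)) := by
    rw [show 2 - (p - 2) = 4 - p by ring]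
    field_simp
  simp only [hQ, hk₀]
  refine ⟨fun t ht => ?_, critical_value_neg_iff hq (by linarith) hcrit⟩
  linarith [sq_mul_sub_mul_rpow_le_of_critical hT (le_of_lt ht) hD hq.le (by linarith) hcrit]

/-- Negative-`γ` case, `a > 0`, `2 < p < 4`, `A = A(u) > 0`, `C = C(u) > 0`: with
`t* = [a(p−2)²C/(2pA)]^{1/(4−p)}` and `Q(uᵗ) = t²A + γc²/4 − a(p−2)/p t^{p−2}C`,
the value `Q(u^{t*})` is the minimum of `t ↦ Q(uᵗ)` over `(0,∞)`, and
`(t*)²A > k₀` if and only if `Q(u^{t*}) < 0`. -/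
theorem mem_V_iff_min_Q_neg
    (γ a p c A C : ℝ) (hγ : 0 < γ) (ha : 0 < a) (hp : 2 < p) (hp4 : p < 4)
    (hc : 0 < c) (hA : 0 < A) (hC : 0 < C) :
    (∀ t ∈ Ioi (0 : ℝ),
        ((a * (p - 2) ^ 2 * C / (2 * p * A)) ^ (1 / (4 - p))) ^ 2 * A + γ * c ^ 2 / 4
          - a * (p - 2) / p
            * ((a * (p - 2) ^ 2 * C / (2 * p * A)) ^ (1 / (4 - p))) ^ (p - 2) * C
        ≤ t ^ 2 * A + γ * c ^ 2 / 4 - a * (p - 2) / p * t ^ (p - 2) * C) ∧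
    (((a * (p - 2) ^ 2 * C / (2 * p * A)) ^ (1 / (4 - p))) ^ 2 * A
        > (p - 2) * γ * c ^ 2 / (4 * (4 - p)) ↔
      ((a * (p - 2) ^ 2 * C / (2 * p * A)) ^ (1 / (4 - p))) ^ 2 * A + γ * c ^ 2 / 4
          - a * (p - 2) / p
            * ((a * (p - 2) ^ 2 * C / (2 * p * A)) ^ (1 / (4 - p))) ^ (p - 2) * C < 0) :=
  mem_V_iff_min_Q_neg_general γ a p c A C ha hp hp4 hA hC
end
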